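/- arXiv:1612.06260 — 2 statements merged into one kernel-verified Lean document; each statement's English description precedes it below -/
import Mathlib

section
/- In Kalai's algorithm, for a fixed prime $p \le N$, the probability that exactly $e$ copies of $p$ appear among the prime terms of the random nonincreasing sequence $N \ge s_1 \ge s_2 \ge \dots \ge s_l = 1$ (where $s_1$ is uniform on $\{1,\dots,N\}$ and each $s_{i+1}$ is uniform on $\{1,\dots,s_i\}$) is $\frac{1}{p^e}\left(1 - \frac{1}{p}\right)$. -/
open MeasureTheory

section
variable {Ω : Type*} [MeasurableSpace Ω] (μ : Measure Ω) (s : ℕ → Ω → ℕ)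

lemma aux_prefix_meas (hmeas : ∀ i, Measurable (s i)) (h : ℕ → ℕ) (i : ℕ) :
    MeasurableSet {ω | ∀ t ≤ i, s t ω = h t} := by
  have : {ω | ∀ t ≤ i, s t ω = h t} = ⋂ t ∈ Set.Iic i, (s t)⁻¹' {h t} := by
    ext ω; simp [Set.mem_iInter]
  rw [this]
  exact MeasurableSet.biInter (Set.to_countable _)
    fun t _ => (hmeas t) (measurableSet_singleton _)

lemma aux_stepA (hmeas : ∀ i, Measurable (s i))
    (hstep : ∀ (i : ℕ) (h : ℕ → ℕ) (j : ℕ), 1 < h i → 1 ≤ j → j ≤ h i →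
      μ {ω | (∀ t ≤ i, s t ω = h t) ∧ s (i + 1) ω = j} =
        (1 / (h i : ENNReal)) * μ {ω | ∀ t ≤ i, s t ω = h t})
    (i c j : ℕ) (hc : 1 < c) (hj1 : 1 ≤ j) (hjc : j ≤ c)
    (Q : (ℕ → ℕ) → Prop)
    (hQdep : ∀ f g : ℕ → ℕ, (∀ t ≤ i, f t = g t) → Q f → Q g)
    (hQc : ∀ f, Q f → f i = c) :
    μ {ω | Q (fun t => s t ω) ∧ s (i+1) ω = j}
      = (1 / (c : ENNReal)) * μ {ω | Q (fun t => s t ω)} := by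
  classical
  set ext : (Fin (i+1) → ℕ) → ℕ → ℕ :=
    fun v t => if h : t < i + 1 then v ⟨t, h⟩ else 0 with hext
  have hagree : ∀ (v : Fin (i+1) → ℕ) (ω : Ω),
      (∀ t ≤ i, s t ω = ext v t) → ∀ t ≤ i, (fun t => s t ω) t = ext v t := by
    intro v ω hv t ht; exact hv t ht
  -- index set
  have key1 : {ω | Q (fun t => s t ω)}
      = ⋃ v : {v : Fin (i+1) → ℕ // Q (ext v)}, {ω | ∀ t ≤ i, s t ω = ext v.1 t} := by
    ext ω
    simp only [Set.mem_setOf_eq, Set.mem_iUnion]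
    constructor
    · intro hQ
      refine ⟨⟨fun t => s t ω, ?_⟩, ?_⟩
      · exact hQdep _ _ (fun t ht => by simp [hext, Nat.lt_succ_of_le ht]; intro h; omega) hQ
      · intro t ht; simp [hext, Nat.lt_succ_of_le ht]; intro h; omega
    · rintro ⟨v, hv⟩
      exact hQdep _ _ (fun t ht => (hv t ht).symm) v.2
  have key2 : {ω | Q (fun t => s t ω) ∧ s (i+1) ω = j}
      = ⋃ v : {v : Fin (i+1) → ℕ // Q (ext v)},
          {ω | (∀ t ≤ i, s t ω = ext v.1 t) ∧ s (i+1) ω = j} := by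
    ext ω
    simp only [Set.mem_setOf_eq, Set.mem_iUnion]
    constructor
    · rintro ⟨hQ, hj⟩
      refine ⟨⟨fun t => s t ω, ?_⟩, ?_, hj⟩
      · exact hQdep _ _ (fun t ht => by simp [hext, Nat.lt_succ_of_le ht]; intro h; omega) hQ
      · intro t ht; simp [hext, Nat.lt_succ_of_le ht]; intro h; omega
    · rintro ⟨v, hv, hj⟩
      exact ⟨hQdep _ _ (fun t ht => (hv t ht).symm) v.2, hj⟩
  have hdisj : ∀ (v w : {v : Fin (i+1) → ℕ // Q (ext v)}), v ≠ w →
      Disjoint {ω | ∀ t ≤ i, s t ω = ext v.1 t} {ω | ∀ t ≤ i, s t ω = ext w.1 t} := by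
    intro v w hvw
    rw [Set.disjoint_left]
    intro ω hv hw
    apply hvw
    apply Subtype.ext
    funext t
    have h1 := hv t (Nat.lt_succ_iff.mp t.2)
    have h2 := hw t (Nat.lt_succ_iff.mp t.2)
    have : ext v.1 t = ext w.1 t := h1 ▸ h2
    simpa [hext, t.2, Nat.lt_succ_iff.mp t.2] using this
  have hdisj2 : ∀ (v w : {v : Fin (i+1) → ℕ // Q (ext v)}), v ≠ w →
      Disjoint {ω | (∀ t ≤ i, s t ω = ext v.1 t) ∧ s (i+1) ω = j}
        {ω | (∀ t ≤ i, s t ω = ext w.1 t) ∧ s (i+1) ω = j} := by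
    intro v w hvw
    exact Set.disjoint_of_subset (fun ω h => h.1) (fun ω h => h.1) (hdisj v w hvw)
  have hcv : ∀ v : {v : Fin (i+1) → ℕ // Q (ext v)}, ext v.1 i = c := fun v => hQc _ v.2
  have hμv : ∀ v : {v : Fin (i+1) → ℕ // Q (ext v)},
      μ {ω | (∀ t ≤ i, s t ω = ext v.1 t) ∧ s (i+1) ω = j}
        = (1 / (c : ENNReal)) * μ {ω | ∀ t ≤ i, s t ω = ext v.1 t} := by
    intro v
    have := hstep i (ext v.1) j (by rw [hcv v]; exact hc) hj1 (by rw [hcv v]; exact hjc)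
    rwa [hcv v] at this
  rw [key1, key2]
  have hms2 : ∀ v : {v : Fin (i+1) → ℕ // Q (ext v)},
      MeasurableSet {ω | (∀ t ≤ i, s t ω = ext v.1 t) ∧ s (i+1) ω = j} := by
    intro v
    have : {ω | (∀ t ≤ i, s t ω = ext v.1 t) ∧ s (i+1) ω = j}
        = {ω | ∀ t ≤ i, s t ω = ext v.1 t} ∩ (s (i+1))⁻¹' {j} := by
      ext ω; simp [Set.mem_setOf_eq]
    rw [this]
    exact (aux_prefix_meas s hmeas _ i).inter ((hmeas (i+1)) (measurableSet_singleton _))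
  rw [measure_iUnion (fun v w hvw => hdisj2 v w hvw) hms2]
  rw [measure_iUnion hdisj (fun v => aux_prefix_meas s hmeas _ i)]
  rw [← ENNReal.tsum_mul_left]
  exact tsum_congr fun v => hμv v

lemma aux_smono (hmono : ∀ i ω, s (i + 1) ω ≤ s i ω) :
    ∀ (ω : Ω) (a b : ℕ), a ≤ b → s b ω ≤ s a ω := by
  intro ω a b hab
  induction b with
  | zero => simp_all
  | succ n ih =>
    rcases Nat.lt_succ_iff_lt_or_eq.mp (Nat.lt_succ_of_le hab) with h | h
    · exact le_trans (hmono n ω) (ih (Nat.lt_succ_iff.mp h))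
    · subst h; rfl

lemma aux_L3' (hmeas : ∀ i, Measurable (s i))
    (hstep : ∀ (i : ℕ) (h : ℕ → ℕ) (j : ℕ), 1 < h i → 1 ≤ j → j ≤ h i →
      μ {ω | (∀ t ≤ i, s t ω = h t) ∧ s (i + 1) ω = j} =
        (1 / (h i : ENNReal)) * μ {ω | ∀ t ≤ i, s t ω = h t})
    (N p : ℕ) (hp1 : 1 ≤ p) (hrange : ∀ i ω, 1 ≤ s i ω ∧ s i ω ≤ N)
    (i j : ℕ) (hj1 : 1 ≤ j) (hjp : j ≤ p) :
    μ {ω | (∀ t < i + 1, p < s t ω) ∧ s (i+1) ω = j}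
      = ∑ c ∈ Finset.Ioc p N,
          (1 / (c : ENNReal)) * μ {ω | (∀ t < i, p < s t ω) ∧ s i ω = c} := by
  classical
  have hdecomp : {ω | (∀ t < i + 1, p < s t ω) ∧ s (i+1) ω = j}
      = ⋃ c ∈ Finset.Ioc p N,
          {ω | ((∀ t < i, p < s t ω) ∧ s i ω = c) ∧ s (i+1) ω = j} := by
    ext ω
    simp only [Set.mem_setOf_eq, Set.mem_iUnion, Finset.mem_Ioc]
    constructor
    · rintro ⟨hgt, hj⟩
      exact ⟨s i ω, ⟨hgt i (Nat.lt_succ_self i), (hrange i ω).2⟩,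
        ⟨fun t ht => hgt t (Nat.lt_succ_of_lt ht), rfl⟩, hj⟩
    · rintro ⟨c, ⟨hcp, _⟩, ⟨hgt, hc⟩, hj⟩
      refine ⟨fun t ht => ?_, hj⟩
      rcases Nat.lt_succ_iff_lt_or_eq.mp ht with h | h
      · exact hgt t h
      · subst h; omega
  rw [hdecomp]
  rw [measure_biUnion_finset ?_ ?_]
  · refine Finset.sum_congr rfl fun c hc => ?_
    rw [Finset.mem_Ioc] at hc
    exact aux_stepA μ s hmeas hstep i c j (by omega) hj1 (by omega)
      (fun f => (∀ t < i, p < f t) ∧ f i = c)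
      (by
        intro f g hfg ⟨h1, h2⟩
        exact ⟨fun t ht => hfg t (le_of_lt ht) ▸ h1 t ht, hfg i le_rfl ▸ h2⟩)
      (fun f hf => hf.2)
  · intro c _ d _ hcd
    rw [Function.onFun, Set.disjoint_left]
    rintro ω ⟨⟨_, hc⟩, _⟩ ⟨⟨_, hd⟩, _⟩
    exact hcd (hc ▸ hd)
  · intro c _
    have : {ω | ((∀ t < i, p < s t ω) ∧ s i ω = c) ∧ s (i+1) ω = j}
        = (⋂ t ∈ Set.Iio i, (s t)⁻¹' (Set.Ioi p)) ∩ (s i)⁻¹' {c} ∩ (s (i+1))⁻¹' {j} := by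
      ext ω; simp [Set.mem_iInter]
    rw [this]
    exact ((MeasurableSet.biInter (Set.to_countable _)
        (fun t _ => (hmeas t) measurableSet_Ioi)).inter
        ((hmeas i) (measurableSet_singleton _))).inter
      ((hmeas (i+1)) (measurableSet_singleton _))

lemma aux_L3 (hmeas : ∀ i, Measurable (s i))
    (hstep : ∀ (i : ℕ) (h : ℕ → ℕ) (j : ℕ), 1 < h i → 1 ≤ j → j ≤ h i →
      μ {ω | (∀ t ≤ i, s t ω = h t) ∧ s (i + 1) ω = j} =
        (1 / (h i : ENNReal)) * μ {ω | ∀ t ≤ i, s t ω = h t})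
    (N p : ℕ) (hpN : p ≤ N) (hrange : ∀ i ω, 1 ≤ s i ω ∧ s i ω ≤ N)
    (hinit : ∀ k, 1 ≤ k → k ≤ N → μ {ω | s 0 ω = k} = 1 / (N : ENNReal))
    (i j : ℕ) (hj1 : 1 ≤ j) (hjp : j ≤ p) :
    μ {ω | (∀ t < i, p < s t ω) ∧ s i ω = j}
      = μ {ω | (∀ t < i, p < s t ω) ∧ s i ω = p} := by
  have hp1 : 1 ≤ p := le_trans hj1 hjp
  cases i with
  | zero =>
    have e1 : {ω | (∀ t < 0, p < s t ω) ∧ s 0 ω = j} = {ω | s 0 ω = j} := by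
      ext ω; simp
    have e2 : {ω | (∀ t < 0, p < s t ω) ∧ s 0 ω = p} = {ω | s 0 ω = p} := by
      ext ω; simp
    rw [e1, e2, hinit j hj1 (le_trans hjp hpN), hinit p hp1 hpN]
  | succ n =>
    rw [aux_L3' μ s hmeas hstep N p hp1 hrange n j hj1 hjp,
      aux_L3' μ s hmeas hstep N p hp1 hrange n p hp1 le_rfl]

lemma aux_L5 (hmeas : ∀ i, Measurable (s i))
    (hstep : ∀ (i : ℕ) (h : ℕ → ℕ) (j : ℕ), 1 < h i → 1 ≤ j → j ≤ h i →
      μ {ω | (∀ t ≤ i, s t ω = h t) ∧ s (i + 1) ω = j} =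
        (1 / (h i : ENNReal)) * μ {ω | ∀ t ≤ i, s t ω = h t})
    (p : ℕ) (hp : 1 < p) (i e : ℕ) :
    μ {ω | (∀ t < i, p < s t ω) ∧ ∀ t, i ≤ t → t ≤ i + e → s t ω = p}
      = (1 / (p : ENNReal)) ^ e * μ {ω | (∀ t < i, p < s t ω) ∧ s i ω = p} := by
  induction e with
  | zero =>
    have : {ω | (∀ t < i, p < s t ω) ∧ ∀ t, i ≤ t → t ≤ i + 0 → s t ω = p}
        = {ω | (∀ t < i, p < s t ω) ∧ s i ω = p} := by
      ext ω
      simp only [Set.mem_setOf_eq, Nat.add_zero]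
      constructor
      · rintro ⟨h1, h2⟩; exact ⟨h1, h2 i le_rfl le_rfl⟩
      · rintro ⟨h1, h2⟩; exact ⟨h1, fun t ht1 ht2 => le_antisymm ht2 ht1 ▸ h2⟩
    rw [this, pow_zero, one_mul]
  | succ e ih =>
    have hset : {ω | (∀ t < i, p < s t ω) ∧ ∀ t, i ≤ t → t ≤ i + (e+1) → s t ω = p}
        = {ω | ((∀ t < i, p < s t ω) ∧ ∀ t, i ≤ t → t ≤ i + e → s t ω = p)
            ∧ s ((i+e)+1) ω = p} := by
      ext ω
      simp only [Set.mem_setOf_eq]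
      constructor
      · rintro ⟨h1, h2⟩
        exact ⟨⟨h1, fun t ht1 ht2 => h2 t ht1 (by omega)⟩, h2 (i+e+1) (by omega) (by omega)⟩
      · rintro ⟨⟨h1, h2⟩, h3⟩
        refine ⟨h1, fun t ht1 ht2 => ?_⟩
        rcases Nat.lt_succ_iff_lt_or_eq.mp (by omega : t < (i + e) + 1 + 1) with h | h
        · exact h2 t ht1 (by omega)
        · subst h; exact h3
    rw [hset]
    have := aux_stepA μ s hmeas hstep (i+e) p p hp (by omega) le_rfl
      (fun f => (∀ t < i, p < f t) ∧ ∀ t, i ≤ t → t ≤ i + e → f t = p)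
      (by
        rintro f g hfg ⟨h1, h2⟩
        exact ⟨fun t ht => hfg t (by omega) ▸ h1 t ht,
          fun t ht1 ht2 => hfg t (by omega) ▸ h2 t ht1 ht2⟩)
      (fun f hf => hf.2 (i+e) (by omega) le_rfl)
    rw [this, ih, pow_succ]
    ring

lemma aux_frac (a b a' b' : ℕ) (hb : 0 < b) (hb' : 0 < b') (h : a * b' ≤ a' * b) :
    (a : ENNReal) / b ≤ (a' : ENNReal) / b' := by
  have hbne : (b : ENNReal) ≠ 0 := by exact_mod_cast hb.ne'
  have hbne' : (b' : ENNReal) ≠ 0 := by exact_mod_cast hb'.ne'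
  rw [ENNReal.div_le_iff_le_mul (Or.inl hbne) (Or.inl (ENNReal.natCast_ne_top b))]
  have : (a' : ENNReal) / b' * b = (a' : ENNReal) * b / b' := by
    simp [div_eq_mul_inv, mul_comm, mul_assoc, mul_left_comm]
  rw [this, ENNReal.le_div_iff_mul_le (Or.inl hbne') (Or.inl (ENNReal.natCast_ne_top b'))]
  exact_mod_cast h

lemma aux_L4a (N p : ℕ) (hp1 : 1 ≤ p)
    (hmeas : ∀ i, Measurable (s i))
    (hinit : ∀ k, 1 ≤ k → k ≤ N → μ {ω | s 0 ω = k} = 1 / (N : ENNReal))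
    (hrange : ∀ i ω, 1 ≤ s i ω ∧ s i ω ≤ N) :
    μ {ω | ∀ t < 1, p < s t ω} ≤ ((N - 1 : ℕ) : ENNReal) / N := by
  classical
  rcases Nat.eq_zero_or_pos N with h0 | hNpos
  · subst h0
    have : {ω | ∀ t < 1, p < s t ω} = (∅ : Set Ω) := by
      ext ω; simp only [Set.mem_setOf_eq, Set.mem_empty_iff_false, iff_false]
      intro h; have := (hrange 0 ω).2; have := h 0 Nat.zero_lt_one; omega
    rw [this]; simp
  have hdec : {ω | ∀ t < 1, p < s t ω} = ⋃ c ∈ Finset.Ioc p N, {ω | s 0 ω = c} := by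
    ext ω
    simp only [Set.mem_setOf_eq, Set.mem_iUnion, Finset.mem_Ioc]
    constructor
    · intro h
      exact ⟨s 0 ω, ⟨h 0 Nat.zero_lt_one, (hrange 0 ω).2⟩, rfl⟩
    · rintro ⟨c, ⟨hc, _⟩, hcs⟩ t ht
      interval_cases t; omega
  have hdisj : (Finset.Ioc p N : Set ℕ).PairwiseDisjoint (fun c => {ω | s 0 ω = c}) := by
    intro c _ d _ hcd
    rw [Function.onFun, Set.disjoint_left]
    rintro ω hc hd
    rw [Set.mem_setOf_eq] at hc hd
    exact hcd (hc ▸ hd)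
  have hmeq : μ (⋃ c ∈ Finset.Ioc p N, {ω | s 0 ω = c})
      = ∑ c ∈ Finset.Ioc p N, μ {ω | s 0 ω = c} :=
    measure_biUnion_finset hdisj (fun c _ => (hmeas 0) (measurableSet_singleton _))
  rw [hdec, hmeq]
  have hcongr : ∀ c ∈ Finset.Ioc p N, μ {ω | s 0 ω = c} = 1 / (N : ENNReal) := by
    intro c hc
    rw [Finset.mem_Ioc] at hc
    exact hinit c (by omega) hc.2
  rw [Finset.sum_congr rfl hcongr, Finset.sum_const, Nat.card_Ioc, nsmul_eq_mul,
    mul_one_div]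
  exact aux_frac (N - p) N (N - 1) N hNpos hNpos
    (by nlinarith [Nat.sub_le N 1, Nat.sub_le_sub_left hp1 N])

lemma aux_L4b (N p : ℕ) (hp1 : 1 ≤ p)
    (hmeas : ∀ i, Measurable (s i))
    (hstep : ∀ (i : ℕ) (h : ℕ → ℕ) (j : ℕ), 1 < h i → 1 ≤ j → j ≤ h i →
      μ {ω | (∀ t ≤ i, s t ω = h t) ∧ s (i + 1) ω = j} =
        (1 / (h i : ENNReal)) * μ {ω | ∀ t ≤ i, s t ω = h t})
    (hrange : ∀ i ω, 1 ≤ s i ω ∧ s i ω ≤ N)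
    (hmono : ∀ i ω, s (i + 1) ω ≤ s i ω) (hN : 1 ≤ N) (i : ℕ) :
    μ {ω | ∀ t < i + 2, p < s t ω}
      ≤ ((N - 1 : ℕ) : ENNReal) / N * μ {ω | ∀ t < i + 1, p < s t ω} := by
  classical
  set q : ENNReal := ((N - 1 : ℕ) : ENNReal) / N with hq
  set Qev : ℕ → Set Ω := fun c => {ω | (∀ t < i + 1, p < s t ω) ∧ s i ω = c} with hQev
  have hQmeas : ∀ c, MeasurableSet (Qev c) := by
    intro c
    have : Qev c = (⋂ t ∈ Set.Iio (i+1), (s t)⁻¹' (Set.Ioi p)) ∩ (s i)⁻¹' {c} := by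
      ext ω; simp [hQev, Set.mem_iInter]
    rw [this]
    exact (MeasurableSet.biInter (Set.to_countable _)
        (fun t _ => (hmeas t) measurableSet_Ioi)).inter ((hmeas i) (measurableSet_singleton _))
  have hdec1 : {ω | ∀ t < i + 2, p < s t ω}
      = ⋃ c ∈ Finset.Ioc p N, ⋃ j ∈ Finset.Ioc p c,
          {ω | ((∀ t < i + 1, p < s t ω) ∧ s i ω = c) ∧ s (i+1) ω = j} := by
    ext ω
    simp only [Set.mem_setOf_eq, Set.mem_iUnion, Finset.mem_Ioc]
    constructor
    · intro h
      exact ⟨s i ω, ⟨h i (by omega), (hrange i ω).2⟩, s (i+1) ω,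
        ⟨h (i+1) (by omega), hmono i ω⟩,
        ⟨fun t ht => h t (by omega), rfl⟩, rfl⟩
    · rintro ⟨c, ⟨hc, _⟩, j, ⟨hj, _⟩, ⟨h1, h2⟩, h3⟩
      intro t ht
      rcases Nat.lt_succ_iff_lt_or_eq.mp ht with h | h
      · exact h1 t h
      · subst h; omega
  have hinmeas : ∀ c j, MeasurableSet
      {ω | ((∀ t < i + 1, p < s t ω) ∧ s i ω = c) ∧ s (i+1) ω = j} := by
    intro c j
    have : {ω | ((∀ t < i + 1, p < s t ω) ∧ s i ω = c) ∧ s (i+1) ω = j}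
        = Qev c ∩ (s (i+1))⁻¹' {j} := by
      ext ω; simp [hQev]
    rw [this]
    exact (hQmeas c).inter ((hmeas (i+1)) (measurableSet_singleton _))
  have hterm : ∀ c ∈ Finset.Ioc p N, ∀ j ∈ Finset.Ioc p c,
      μ {ω | ((∀ t < i + 1, p < s t ω) ∧ s i ω = c) ∧ s (i+1) ω = j}
        = (1 / (c : ENNReal)) * μ (Qev c) := by
    intro c hc j hj
    rw [Finset.mem_Ioc] at hc hj
    exact aux_stepA μ s hmeas hstep i c j (by omega) (by omega) hj.2
      (fun f => (∀ t < i + 1, p < f t) ∧ f i = c)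
      (by
        rintro f g hfg ⟨h1, h2⟩
        exact ⟨fun t ht => hfg t (by omega) ▸ h1 t ht, hfg i (by omega) ▸ h2⟩)
      (fun f hf => hf.2)
  have hmeq1 : μ {ω | ∀ t < i + 2, p < s t ω}
      = ∑ c ∈ Finset.Ioc p N, ∑ j ∈ Finset.Ioc p c,
          μ {ω | ((∀ t < i + 1, p < s t ω) ∧ s i ω = c) ∧ s (i+1) ω = j} := by
    rw [hdec1]
    have hdisjout : (Finset.Ioc p N : Set ℕ).PairwiseDisjoint
        (fun c => ⋃ j ∈ Finset.Ioc p c,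
          {ω | ((∀ t < i + 1, p < s t ω) ∧ s i ω = c) ∧ s (i+1) ω = j}) := by
      intro a _ b _ hab
      rw [Function.onFun, Set.disjoint_left]
      simp only [Set.mem_iUnion]
      rintro ω ⟨_, _, ⟨⟨_, ha⟩, _⟩⟩ ⟨_, _, ⟨⟨_, hb⟩, _⟩⟩
      exact hab (ha ▸ hb)
    rw [measure_biUnion_finset hdisjout (fun c _ =>
      MeasurableSet.biUnion (Finset.countable_toSet _) (fun j _ => hinmeas c j))]
    refine Finset.sum_congr rfl fun c hc => ?_
    exact measure_biUnion_finset
      (by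
        intro a _ b _ hab
        rw [Function.onFun, Set.disjoint_left]
        rintro ω ⟨_, ha⟩ ⟨_, hb⟩
        exact hab (ha ▸ hb))
      (fun j _ => hinmeas c j)
  have hfrac : ∀ c ∈ Finset.Ioc p N,
      ((c - p : ℕ) : ENNReal) * (1 / (c : ENNReal)) ≤ q := by
    intro c hc
    rw [Finset.mem_Ioc] at hc
    rw [mul_one_div, hq]
    refine aux_frac (c - p) c (N - 1) N (by omega) (by omega) ?_
    obtain ⟨a, rfl⟩ : ∃ a, c = p + a := ⟨c - p, by omega⟩
    obtain ⟨b, rfl⟩ : ∃ b, N = b + 1 := ⟨N - 1, by omega⟩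
    simp only [Nat.add_sub_cancel_left, Nat.add_sub_cancel]
    have h1 : a ≤ b := by omega
    nlinarith [h1, hp1]
  have hdec2 : {ω | ∀ t < i + 1, p < s t ω} = ⋃ c ∈ Finset.Ioc p N, Qev c := by
    ext ω
    simp only [hQev, Set.mem_setOf_eq, Set.mem_iUnion, Finset.mem_Ioc]
    constructor
    · intro h
      exact ⟨s i ω, ⟨h i (by omega), (hrange i ω).2⟩, h, rfl⟩
    · rintro ⟨c, _, h, _⟩
      exact h
  have hmeq2 : μ {ω | ∀ t < i + 1, p < s t ω} = ∑ c ∈ Finset.Ioc p N, μ (Qev c) := by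
    rw [hdec2]
    refine measure_biUnion_finset ?_ (fun c _ => hQmeas c)
    intro a _ b _ hab
    rw [Function.onFun, Set.disjoint_left]
    rintro ω ⟨_, ha⟩ ⟨_, hb⟩
    exact hab (ha ▸ hb)
  rw [hmeq1, hmeq2, Finset.mul_sum]
  refine Finset.sum_le_sum fun c hc => ?_
  rw [Finset.sum_congr rfl (hterm c hc), Finset.sum_const, Nat.card_Ioc, nsmul_eq_mul,
    ← mul_assoc]
  exact mul_le_mul_left (hfrac c hc) _

lemma aux_L4d (N p : ℕ) (hp1 : 1 ≤ p) [IsProbabilityMeasure μ]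
    (hmeas : ∀ i, Measurable (s i))
    (hstep : ∀ (i : ℕ) (h : ℕ → ℕ) (j : ℕ), 1 < h i → 1 ≤ j → j ≤ h i →
      μ {ω | (∀ t ≤ i, s t ω = h t) ∧ s (i + 1) ω = j} =
        (1 / (h i : ENNReal)) * μ {ω | ∀ t ≤ i, s t ω = h t})
    (hinit : ∀ k, 1 ≤ k → k ≤ N → μ {ω | s 0 ω = k} = 1 / (N : ENNReal))
    (hrange : ∀ i ω, 1 ≤ s i ω ∧ s i ω ≤ N)
    (hmono : ∀ i ω, s (i + 1) ω ≤ s i ω) (hN : 1 ≤ N) :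
    μ {ω | ∀ t, p < s t ω} = 0 := by
  set q : ENNReal := ((N - 1 : ℕ) : ENNReal) / N with hq
  have hGpow : ∀ i, μ {ω | ∀ t < i, p < s t ω} ≤ q ^ i := by
    intro i
    induction i with
    | zero =>
      have : {ω | ∀ t < 0, p < s t ω} = Set.univ := by ext ω; simp
      rw [this, pow_zero, measure_univ]
    | succ n ih =>
      cases n with
      | zero =>
        rw [pow_one]
        exact aux_L4a μ s N p hp1 hmeas hinit hrange
      | succ m =>
        calc μ {ω | ∀ t < m + 2, p < s t ω}
            ≤ q * μ {ω | ∀ t < m + 1, p < s t ω} :=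
              aux_L4b μ s N p hp1 hmeas hstep hrange hmono hN m
          _ ≤ q * q ^ (m + 1) := mul_le_mul_right ih q
          _ = q ^ (m + 2) := by ring
  have hqlt : q < 1 := by
    rw [hq, ENNReal.div_lt_iff (Or.inl (Nat.cast_ne_zero.mpr (by omega)))
      (Or.inl (ENNReal.natCast_ne_top N)), one_mul]
    exact_mod_cast Nat.sub_lt hN Nat.one_pos
  have htend : Filter.Tendsto (fun i => q ^ i) Filter.atTop (nhds 0) :=
    ENNReal.tendsto_pow_atTop_nhds_zero_of_lt_one hqlt
  have hsub : ∀ i, μ {ω | ∀ t, p < s t ω} ≤ q ^ i := by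
    intro i
    exact le_trans (measure_mono (Set.setOf_subset_setOf.mpr (fun ω h t _ => h t))) (hGpow i)
  have := ge_of_tendsto' htend hsub
  exact le_antisymm this zero_le

lemma aux_L7 (N p : ℕ) (hp : 1 < p) (hpN : p ≤ N) [IsProbabilityMeasure μ]
    (hmeas : ∀ i, Measurable (s i))
    (hstep : ∀ (i : ℕ) (h : ℕ → ℕ) (j : ℕ), 1 < h i → 1 ≤ j → j ≤ h i →
      μ {ω | (∀ t ≤ i, s t ω = h t) ∧ s (i + 1) ω = j} =
        (1 / (h i : ENNReal)) * μ {ω | ∀ t ≤ i, s t ω = h t})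
    (hinit : ∀ k, 1 ≤ k → k ≤ N → μ {ω | s 0 ω = k} = 1 / (N : ENNReal))
    (hrange : ∀ i ω, 1 ≤ s i ω ∧ s i ω ≤ N)
    (hmono : ∀ i ω, s (i + 1) ω ≤ s i ω) :
    ∑' i, μ {ω | (∀ t < i, p < s t ω) ∧ s i ω = p} = 1 / (p : ENNReal) := by
  classical
  have hN : 1 ≤ N := le_trans (le_of_lt hp) hpN
  set V : ℕ → Set Ω := fun i => {ω | (∀ t < i, p < s t ω) ∧ s i ω ≤ p} with hV
  have hVmeas : ∀ i, MeasurableSet (V i) := by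
    intro i
    have : V i = (⋂ t ∈ Set.Iio i, (s t)⁻¹' (Set.Ioi p)) ∩ (s i)⁻¹' (Set.Iic p) := by
      ext ω; simp [hV, Set.mem_iInter]
    rw [this]
    exact (MeasurableSet.biInter (Set.to_countable _)
        (fun t _ => (hmeas t) measurableSet_Ioi)).inter ((hmeas i) measurableSet_Iic)
  have hVdisj : Pairwise (Function.onFun Disjoint V) := by
    intro a b hab
    rcases Nat.lt_or_ge a b with h | h
    · rw [Function.onFun, Set.disjoint_left]
      rintro ω ⟨_, ha⟩ ⟨hb, _⟩
      exact absurd (hb a h) (by omega)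
    · have h' : b < a := by omega
      rw [Function.onFun, Set.disjoint_right]
      rintro ω ⟨_, hb⟩ ⟨ha, _⟩
      exact absurd (ha b h') (by omega)
  have hU : (⋃ i, V i) = {ω | ∃ i, s i ω ≤ p} := by
    ext ω
    simp only [Set.mem_iUnion, hV, Set.mem_setOf_eq]
    constructor
    · rintro ⟨i, _, hi⟩; exact ⟨i, hi⟩
    · rintro hex
      refine ⟨Nat.find hex, fun t ht => ?_, Nat.find_spec hex⟩
      have := Nat.find_min hex ht
      omega
  have hUμ : μ (⋃ i, V i) = 1 := by
    rw [hU]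
    have hmeasU : MeasurableSet {ω | ∃ i, s i ω ≤ p} := by
      have : {ω | ∃ i, s i ω ≤ p} = ⋃ i, (s i)⁻¹' (Set.Iic p) := by
        ext ω; simp
      rw [this]
      exact MeasurableSet.iUnion fun i => (hmeas i) measurableSet_Iic
    rw [← prob_compl_eq_zero_iff hmeasU]
    have : {ω | ∃ i, s i ω ≤ p}ᶜ = {ω | ∀ t, p < s t ω} := by
      ext ω; simp [Set.mem_compl_iff]
    rw [this]
    exact aux_L4d μ s N p (by omega) hmeas hstep hinit hrange hmono hN
  have hVsum : ∀ i, μ (V i) = (p : ENNReal) * μ {ω | (∀ t < i, p < s t ω) ∧ s i ω = p} := by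
    intro i
    have hdec : V i = ⋃ j ∈ Finset.Icc 1 p, {ω | (∀ t < i, p < s t ω) ∧ s i ω = j} := by
      ext ω
      simp only [hV, Set.mem_setOf_eq, Set.mem_iUnion, Finset.mem_Icc]
      constructor
      · rintro ⟨h1, h2⟩
        exact ⟨s i ω, ⟨(hrange i ω).1, h2⟩, h1, rfl⟩
      · rintro ⟨j, ⟨_, hj⟩, h1, h2⟩
        exact ⟨h1, by omega⟩
    have hmeasj : ∀ j : ℕ, MeasurableSet {ω | (∀ t < i, p < s t ω) ∧ s i ω = j} := by
      intro j
      have : {ω | (∀ t < i, p < s t ω) ∧ s i ω = j}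
          = (⋂ t ∈ Set.Iio i, (s t)⁻¹' (Set.Ioi p)) ∩ (s i)⁻¹' {j} := by
        ext ω; simp [Set.mem_iInter]
      rw [this]
      exact (MeasurableSet.biInter (Set.to_countable _)
          (fun t _ => (hmeas t) measurableSet_Ioi)).inter ((hmeas i) (measurableSet_singleton _))
    have hdisjj : (Finset.Icc 1 p : Set ℕ).PairwiseDisjoint
        (fun j => {ω | (∀ t < i, p < s t ω) ∧ s i ω = j}) := by
      intro a _ b _ hab
      rw [Function.onFun, Set.disjoint_left]
      rintro ω ⟨_, ha⟩ ⟨_, hb⟩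
      exact hab (ha ▸ hb)
    rw [hdec, measure_biUnion_finset hdisjj (fun j _ => hmeasj j)]
    have : ∀ j ∈ Finset.Icc 1 p,
        μ {ω | (∀ t < i, p < s t ω) ∧ s i ω = j}
          = μ {ω | (∀ t < i, p < s t ω) ∧ s i ω = p} := by
      intro j hj
      rw [Finset.mem_Icc] at hj
      exact aux_L3 μ s hmeas hstep N p hpN hrange hinit i j hj.1 hj.2
    rw [Finset.sum_congr rfl this, Finset.sum_const, Nat.card_Icc, nsmul_eq_mul]
    norm_num
  have htot : (p : ENNReal) * ∑' i, μ {ω | (∀ t < i, p < s t ω) ∧ s i ω = p} = 1 := by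
    rw [← ENNReal.tsum_mul_left]
    rw [← tsum_congr hVsum]
    rw [← measure_iUnion hVdisj hVmeas, hUμ]
  have hpne : (p : ENNReal) ≠ 0 := Nat.cast_ne_zero.mpr (by omega)
  have hpnet : (p : ENNReal) ≠ ⊤ := ENNReal.natCast_ne_top p
  rw [ENNReal.eq_div_iff hpne hpnet]
  exact htot

lemma aux_Ae (N p : ℕ) (hp : 1 < p) (hpN : p ≤ N) [IsProbabilityMeasure μ]
    (hmeas : ∀ i, Measurable (s i))
    (hstep : ∀ (i : ℕ) (h : ℕ → ℕ) (j : ℕ), 1 < h i → 1 ≤ j → j ≤ h i →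
      μ {ω | (∀ t ≤ i, s t ω = h t) ∧ s (i + 1) ω = j} =
        (1 / (h i : ENNReal)) * μ {ω | ∀ t ≤ i, s t ω = h t})
    (hinit : ∀ k, 1 ≤ k → k ≤ N → μ {ω | s 0 ω = k} = 1 / (N : ENNReal))
    (hrange : ∀ i ω, 1 ≤ s i ω ∧ s i ω ≤ N)
    (hmono : ∀ i ω, s (i + 1) ω ≤ s i ω) (e : ℕ) :
    μ {ω | ∃ i, s i ω = p ∧ s (i + e) ω = p} = (1 / (p : ENNReal)) ^ (e + 1) := by
  classical
  set F : ℕ → Set Ω :=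
    fun i => {ω | (∀ t < i, p < s t ω) ∧ ∀ t, i ≤ t → t ≤ i + e → s t ω = p} with hF
  have hFmeas : ∀ i, MeasurableSet (F i) := by
    intro i
    have : F i = (⋂ t ∈ Set.Iio i, (s t)⁻¹' (Set.Ioi p))
        ∩ (⋂ t ∈ Set.Icc i (i+e), (s t)⁻¹' {p}) := by
      ext ω; simp [hF, Set.mem_iInter]
    rw [this]
    exact (MeasurableSet.biInter (Set.to_countable _)
        (fun t _ => (hmeas t) measurableSet_Ioi)).inter
      (MeasurableSet.biInter (Set.to_countable _)
        (fun t _ => (hmeas t) (measurableSet_singleton _)))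
  have hFdisj : Pairwise (Function.onFun Disjoint F) := by
    have key : ∀ a b : ℕ, a < b → Disjoint (F a) (F b) := by
      intro a b hab
      rw [Set.disjoint_left]
      rintro ω ⟨_, ha⟩ ⟨hb, _⟩
      have h1 : s a ω = p := ha a le_rfl (by omega)
      have h2 : p < s a ω := hb a hab
      omega
    intro a b hab
    rcases Nat.lt_or_ge a b with h | h
    · exact key a b h
    · exact (key b a (by omega)).symm
  have hdec : {ω | ∃ i, s i ω = p ∧ s (i + e) ω = p} = ⋃ i, F i := by
    ext ω
    simp only [Set.mem_setOf_eq, Set.mem_iUnion, hF]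
    constructor
    · rintro ⟨i, hi, hie⟩
      have hex : ∃ t, s t ω ≤ p := ⟨i, le_of_eq hi⟩
      have hi0le : Nat.find hex ≤ i := Nat.find_le (le_of_eq hi)
      have hi0p : s (Nat.find hex) ω = p := by
        have h1 := Nat.find_spec hex
        have h2 : s i ω ≤ s (Nat.find hex) ω := aux_smono s hmono ω _ i hi0le
        omega
      refine ⟨Nat.find hex, fun t ht => ?_, fun t ht1 ht2 => ?_⟩
      · have := Nat.find_min hex ht
        omega
      · have h1 : s t ω ≤ s (Nat.find hex) ω := aux_smono s hmono ω _ t ht1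
        have h2 : s (i + e) ω ≤ s t ω := aux_smono s hmono ω t (i + e) (by omega)
        omega
    · rintro ⟨i, _, h2⟩
      exact ⟨i, h2 i le_rfl (by omega), h2 (i + e) (by omega) le_rfl⟩
  rw [hdec, measure_iUnion hFdisj hFmeas]
  have : ∀ i, μ (F i) = (1 / (p : ENNReal)) ^ e
      * μ {ω | (∀ t < i, p < s t ω) ∧ s i ω = p} :=
    fun i => aux_L5 μ s hmeas hstep p hp i e
  rw [tsum_congr this, ENNReal.tsum_mul_left,
    aux_L7 μ s N p hp hpN hmeas hstep hinit hrange hmono, pow_succ]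
end


/-- In Kalai's algorithm, for a fixed prime `p ≤ N`, the probability that exactly `e` copies
of `p` appear among the terms of the random nonincreasing sequence
`N ≥ s 0 ≥ s 1 ≥ …` (with `s 0` uniform on `{1, …, N}`, each `s (i+1)` uniform on
`{1, …, s i}`, and `1` absorbing) is `(1/p)^e * (1 - 1/p)`. -/
theorem stmt_5 (N : ℕ) (hN : 1 ≤ N)
    (Ω : Type*) [MeasurableSpace Ω] (μ : Measure Ω) [IsProbabilityMeasure μ]
    (s : ℕ → Ω → ℕ) (hmeas : ∀ i, Measurable (s i))
    (hrange : ∀ i ω, 1 ≤ s i ω ∧ s i ω ≤ N)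
    (hmono : ∀ i ω, s (i + 1) ω ≤ s i ω)
    (habs : ∀ i ω, s i ω = 1 → s (i + 1) ω = 1)
    (hinit : ∀ k, 1 ≤ k → k ≤ N → μ {ω | s 0 ω = k} = 1 / (N : ENNReal))
    (hstep : ∀ (i : ℕ) (h : ℕ → ℕ) (j : ℕ), 1 < h i → 1 ≤ j → j ≤ h i →
      μ {ω | (∀ t ≤ i, s t ω = h t) ∧ s (i + 1) ω = j} =
        (1 / (h i : ENNReal)) * μ {ω | ∀ t ≤ i, s t ω = h t})
    (p : ℕ) (hp : p.Prime) (hpN : p ≤ N) (e : ℕ) :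
    μ {ω | Set.ncard {i | s i ω = p} = e} =
      (1 / (p : ENNReal)) ^ e * (1 - 1 / (p : ENNReal)) := by
  classical
  have hp2 : 1 < p := hp.one_lt
  set A : ℕ → Set Ω := fun m => {ω | ∃ i, s i ω = p ∧ s (i + m) ω = p} with hA
  have hAμ : ∀ m, μ (A m) = (1 / (p : ENNReal)) ^ (m + 1) :=
    fun m => aux_Ae μ s N p hp2 hpN hmeas hstep hinit hrange hmono m
  have hAmeas : ∀ m, MeasurableSet (A m) := by
    intro m
    have : A m = ⋃ i, ((s i)⁻¹' {p} ∩ (s (i + m))⁻¹' {p}) := by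
      ext ω; simp [hA]
    rw [this]
    exact MeasurableSet.iUnion fun i =>
      ((hmeas i) (measurableSet_singleton _)).inter ((hmeas (i + m)) (measurableSet_singleton _))
  have hsand : ∀ (ω : Ω) (a b t : ℕ), a ≤ t → t ≤ b → s a ω = p → s b ω = p → s t ω = p := by
    intro ω a b t h1 h2 ha hb
    have k1 : s t ω ≤ s a ω := aux_smono s hmono ω a t h1
    have k2 : s b ω ≤ s t ω := aux_smono s hmono ω t b h2
    omega
  have hAmono : ∀ m, A (m + 1) ⊆ A m := by
    rintro m ω ⟨i, hi, him⟩
    exact ⟨i, hi, hsand ω i (i + (m+1)) (i + m) (by omega) (by omega) hi him⟩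
  have hInfA : ∀ ω, {i | s i ω = p}.Infinite → ∀ m, ω ∈ A m := by
    intro ω hinf m
    obtain ⟨i, hi⟩ : ∃ i, s i ω = p := by
      obtain ⟨i, hi, _⟩ := hinf.exists_gt 0
      exact ⟨i, hi⟩
    obtain ⟨j, hj, hij⟩ := hinf.exists_gt (i + m)
    exact ⟨i, hi, hsand ω i j (i + m) (by omega) (by omega) hi hj⟩
  have hInter : μ (⋂ m, A m) = 0 := by
    have hle : ∀ m, μ (⋂ m, A m) ≤ (1 / (p : ENNReal)) ^ (m + 1) := by
      intro m
      rw [← hAμ m]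
      exact measure_mono (Set.iInter_subset A m)
    have hlt : (1 / (p : ENNReal)) < 1 := by
      rw [one_div]
      exact ENNReal.inv_lt_one.mpr (by exact_mod_cast hp2)
    have htend : Filter.Tendsto (fun m => (1 / (p : ENNReal)) ^ (m + 1))
        Filter.atTop (nhds 0) := by
      have h1 := ENNReal.tendsto_pow_atTop_nhds_zero_of_lt_one hlt
      exact h1.comp (Filter.tendsto_add_atTop_nat 1)
    exact le_antisymm (ge_of_tendsto' htend hle) zero_le
  have hIcc : ∀ ω, ({i | s i ω = p}).Finite → ({i | s i ω = p}).Nonempty →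
      {i | s i ω = p} = Set.Icc (sInf {i | s i ω = p}) (sSup {i | s i ω = p}) := by
    intro ω hfin hne
    have ha : sInf {i | s i ω = p} ∈ {i | s i ω = p} := Nat.sInf_mem hne
    have hb : sSup {i | s i ω = p} ∈ {i | s i ω = p} := Nat.sSup_mem hne hfin.bddAbove
    apply Set.Subset.antisymm
    · intro x hx
      exact ⟨Nat.sInf_le hx, le_csSup hfin.bddAbove hx⟩
    · intro x hx
      exact hsand ω _ _ x hx.1 hx.2 ha hb
  have hnIcc : ∀ a b : ℕ, (Set.Icc a b).ncard = b + 1 - a := by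
    intro a b
    rw [← Finset.coe_Icc, Set.ncard_coe_finset, Nat.card_Icc]
  cases e with
  | zero =>
    have hsub1 : (A 0)ᶜ ⊆ {ω | Set.ncard {i | s i ω = p} = 0} := by
      intro ω hω
      have : {i | s i ω = p} = ∅ := by
        ext i
        simp only [Set.mem_setOf_eq, Set.mem_empty_iff_false, iff_false]
        intro hi
        exact hω ⟨i, hi, by simpa using hi⟩
      simp [this]
    have hsub2 : {ω | Set.ncard {i | s i ω = p} = 0} ⊆ (A 0)ᶜ ∪ ⋂ m, A m := by
      intro ω hω
      rcases Set.eq_empty_or_nonempty {i | s i ω = p} with hemp | hne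
      · left
        rintro ⟨i, hi, _⟩
        exact absurd hi (by rw [Set.eq_empty_iff_forall_notMem] at hemp; exact hemp i)
      · right
        have hinf : {i | s i ω = p}.Infinite := by
          by_contra hfin
          rw [Set.not_infinite] at hfin
          have := hω
          rw [Set.mem_setOf_eq, Set.ncard_eq_zero hfin] at this
          exact absurd this (Set.nonempty_iff_ne_empty.mp hne)
        exact Set.mem_iInter.mpr (hInfA ω hinf)
    have h1 : μ {ω | Set.ncard {i | s i ω = p} = 0} ≤ μ ((A 0)ᶜ) := by
      calc μ {ω | Set.ncard {i | s i ω = p} = 0} ≤ μ ((A 0)ᶜ ∪ ⋂ m, A m) :=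
            measure_mono hsub2
        _ ≤ μ ((A 0)ᶜ) + μ (⋂ m, A m) := measure_union_le _ _
        _ = μ ((A 0)ᶜ) := by rw [hInter, add_zero]
    have h2 : μ ((A 0)ᶜ) ≤ μ {ω | Set.ncard {i | s i ω = p} = 0} := measure_mono hsub1
    have h3 : μ ((A 0)ᶜ) = 1 - 1 / (p : ENNReal) := by
      rw [measure_compl (hAmeas 0) (measure_ne_top μ _), hAμ 0, pow_one, measure_univ]
    rw [le_antisymm h1 h2, h3, pow_zero, one_mul]
  | succ e' =>
    have hset : {ω | Set.ncard {i | s i ω = p} = e' + 1} = A e' \ A (e' + 1) := by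
      ext ω
      simp only [Set.mem_setOf_eq, Set.mem_diff]
      constructor
      · intro hcard
        have hfin : {i | s i ω = p}.Finite := by
          by_contra hinf
          rw [Set.Infinite.ncard hinf] at hcard
          omega
        have hne : {i | s i ω = p}.Nonempty :=
          Set.nonempty_of_ncard_ne_zero (by omega)
        obtain ⟨a, b, heq, hap, hbp⟩ :
            ∃ a b, {i | s i ω = p} = Set.Icc a b ∧ s a ω = p ∧ s b ω = p :=
          ⟨_, _, hIcc ω hfin hne, Nat.sInf_mem hne, Nat.sSup_mem hne hfin.bddAbove⟩
        have hab : a ≤ b := by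
          have ha : a ∈ Set.Icc a b := heq ▸ (Set.mem_setOf_eq ▸ hap)
          exact ha.2
        have hcard' : b + 1 - a = e' + 1 := by
          rw [heq, hnIcc] at hcard
          exact hcard
        have hb : b = a + e' := by omega
        constructor
        · exact ⟨a, hap, by rw [← hb]; exact hbp⟩
        · rintro ⟨i, hi, hie⟩
          have h1 : i ∈ Set.Icc a b := heq ▸ (Set.mem_setOf_eq ▸ hi)
          have h2 : i + (e' + 1) ∈ Set.Icc a b := heq ▸ (Set.mem_setOf_eq ▸ hie)
          rw [Set.mem_Icc] at h1 h2
          omega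
      · rintro ⟨⟨i, hi, hie⟩, hnot⟩
        have hfin : {i | s i ω = p}.Finite := by
          by_contra hinf
          exact hnot (hInfA ω hinf (e' + 1))
        have hne : {i | s i ω = p}.Nonempty := ⟨i, hi⟩
        obtain ⟨a, b, heq, hap, hbp⟩ :
            ∃ a b, {i | s i ω = p} = Set.Icc a b ∧ s a ω = p ∧ s b ω = p :=
          ⟨_, _, hIcc ω hfin hne, Nat.sInf_mem hne, Nat.sSup_mem hne hfin.bddAbove⟩
        have h1 : i ∈ Set.Icc a b := heq ▸ (Set.mem_setOf_eq ▸ hi)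
        have h2 : i + e' ∈ Set.Icc a b := heq ▸ (Set.mem_setOf_eq ▸ hie)
        rw [Set.mem_Icc] at h1 h2
        have hble : b ≤ a + e' := by
          by_contra hlt
          push_neg at hlt
          exact hnot ⟨a, hap, hsand ω a b (a + (e' + 1)) (by omega) (by omega) hap hbp⟩
        have hb : b = a + e' := by omega
        rw [heq, hnIcc]
        omega
    rw [hset, measure_diff (hAmono e') (hAmeas (e' + 1)).nullMeasurableSet
      (measure_ne_top μ _), hAμ, hAμ]
    have hfin : (1 / (p : ENNReal)) ^ (e' + 1) ≠ ⊤ := by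
      apply ENNReal.pow_ne_top
      rw [one_div]
      exact ENNReal.inv_ne_top.mpr (Nat.cast_ne_zero.mpr (by omega))
    rw [ENNReal.mul_sub (fun _ _ => hfin), mul_one, ← pow_succ]
end

section
/- Let $s_1$ be uniform on $\{1,\dots,N\}$ and, given $s_i > 1$, let $s_{i+1}$ be uniform on $\{1,\dots,s_i\}$, stopping when $s_l = 1$. Then the expected length of the sequence is $O(\log N)$. -/
open MeasureTheory

lemma kalai_halving {Ω : Type} [MeasurableSpace Ω] (μ : Measure Ω)
    (N : ℕ) (s : ℕ → Ω → ℕ) (hmeas : ∀ i, Measurable (s i))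
    (hbound : ∀ i ω, 1 ≤ s i ω ∧ s i ω ≤ N)
    (hmono : ∀ i ω, s (i + 1) ω ≤ s i ω)
    (hstep : ∀ (i : ℕ) (h : ℕ → ℕ) (j : ℕ), 1 < h i → 1 ≤ j → j ≤ h i →
       μ {ω | (∀ t ≤ i, s t ω = h t) ∧ s (i + 1) ω = j} =
         (1 / (h i : ENNReal)) * μ {ω | ∀ t ≤ i, s t ω = h t})
    (i : ℕ) :
    2 * ∫⁻ ω, ((s (i+1) ω - 1 : ℕ) : ENNReal) ∂μ ≤ ∫⁻ ω, ((s i ω - 1 : ℕ) : ENNReal) ∂μ := by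
  classical
  set V : Finset (ℕ → ℕ) :=
    (Fintype.piFinset fun _ : Fin (i+1) => Finset.Icc 1 N).image
      (fun g t => if h : t < i+1 then g ⟨t, h⟩ else 1) with hV
  set A : (ℕ → ℕ) → Set Ω := fun v => {ω | ∀ t ≤ i, s t ω = v t} with hA
  have hA_meas : ∀ v, MeasurableSet (A v) := by
    intro v
    have : A v = ⋂ t ∈ Set.Iic i, (s t) ⁻¹' {v t} := by
      ext ω; simp [hA, Set.mem_iInter]
    rw [this]
    exact MeasurableSet.biInter (Set.to_countable _)
      (fun t _ => (hmeas t) (measurableSet_singleton _))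
  set hist : Ω → (ℕ → ℕ) := fun ω t => if t ≤ i then s t ω else 1 with hhist
  have hhist_mem : ∀ ω, hist ω ∈ V := by
    intro ω
    refine Finset.mem_image.2 ⟨fun t => s t ω, ?_, ?_⟩
    · refine Fintype.mem_piFinset.2 fun t => ?_
      exact Finset.mem_Icc.2 ⟨(hbound t ω).1, (hbound t ω).2⟩
    · funext t
      by_cases h : t < i + 1
      · simp [hhist, h, Nat.lt_succ_iff.mp h]
      · have ht : ¬ t ≤ i := fun hh => h (Nat.lt_succ_iff.mpr hh)
        simp [hhist, h, ht]
  have hVone : ∀ v ∈ V, ∀ t, ¬ t ≤ i → v t = 1 := by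
    intro v hv t ht
    obtain ⟨g, _, rfl⟩ := Finset.mem_image.1 hv
    have : ¬ t < i + 1 := fun h => ht (Nat.lt_succ_iff.mp h)
    simp [this]
  have hmem_iff : ∀ v ∈ V, ∀ ω, ω ∈ A v ↔ hist ω = v := by
    intro v hv ω
    constructor
    · intro hω; funext t
      by_cases ht : t ≤ i
      · simpa [hhist, ht] using hω t ht
      · simp [hhist, ht, hVone v hv t ht]
    · intro h t ht
      have := congrFun h t
      simpa [hhist, ht] using this
  have hself : ∀ ω, ω ∈ A (hist ω) := by
    intro ω t ht; simp [hhist, ht]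
  -- pointwise decomposition of any function
  have hdecomp : ∀ (g : Ω → ENNReal) (ω : Ω), g ω = ∑ v ∈ V, (A v).indicator g ω := by
    intro g ω
    rw [Finset.sum_eq_single (hist ω)]
    · simp [Set.indicator_apply, hself ω]
    · intro v hv hne
      have : ω ∉ A v := fun h => hne ((hmem_iff v hv ω).1 h).symm
      simp [Set.indicator_apply, this]
    · intro h; exact absurd (hhist_mem ω) h
  have hsplit : ∀ (g : Ω → ENNReal), Measurable g →
      ∫⁻ ω, g ω ∂μ = ∑ v ∈ V, ∫⁻ ω, (A v).indicator g ω ∂μ := by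
    intro g hg
    rw [← lintegral_finset_sum V (fun v _ => hg.indicator (hA_meas v))]
    exact lintegral_congr (hdecomp g)
  have hFmeas : ∀ m : ℕ, Measurable (fun ω => ((s m ω - 1 : ℕ) : ENNReal)) := by
    intro m
    exact (measurable_from_nat (f := fun n : ℕ => ((n - 1 : ℕ) : ENNReal))).comp (hmeas m)
  rw [hsplit _ (hFmeas i), hsplit _ (hFmeas (i+1)), Finset.mul_sum]
  refine Finset.sum_le_sum fun v hv => ?_
  -- RHS term
  have hRHS : ∫⁻ ω, (A v).indicator (fun ω => ((s i ω - 1 : ℕ) : ENNReal)) ω ∂μ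
      = ((v i - 1 : ℕ) : ENNReal) * μ (A v) := by
    have : (A v).indicator (fun ω => ((s i ω - 1 : ℕ) : ENNReal))
        = (A v).indicator (fun _ => ((v i - 1 : ℕ) : ENNReal)) := by
      apply Set.indicator_congr
      intro ω hω
      have h1 : s i ω = v i := hω i le_rfl
      simp [h1]
    rw [this, lintegral_indicator_const (hA_meas v)]
  rw [hRHS]
  -- LHS decomposition over j
  set B : ℕ → Set Ω := fun j => {ω | (∀ t ≤ i, s t ω = v t) ∧ s (i + 1) ω = j} with hB
  have hB_meas : ∀ j, MeasurableSet (B j) := by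
    intro j
    have : B j = A v ∩ (s (i+1)) ⁻¹' {j} := by
      ext ω
      simp only [hB, hA, Set.mem_setOf_eq, Set.mem_inter_iff, Set.mem_preimage,
        Set.mem_singleton_iff]
    rw [this]
    exact (hA_meas v).inter ((hmeas (i+1)) (measurableSet_singleton _))
  have hLHSpt : ∀ ω, (A v).indicator (fun ω => ((s (i+1) ω - 1 : ℕ) : ENNReal)) ω
      = ∑ j ∈ Finset.Icc 1 (v i), (B j).indicator (fun _ => ((j - 1 : ℕ) : ENNReal)) ω := by
    intro ω
    by_cases hω : ω ∈ A v
    · rw [Set.indicator_of_mem hω, Finset.sum_eq_single (s (i+1) ω)]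
      · have : ω ∈ B (s (i+1) ω) := ⟨hω, rfl⟩
        rw [Set.indicator_of_mem this]
      · intro j _ hj
        have : ω ∉ B j := fun h => hj h.2.symm
        rw [Set.indicator_of_notMem this]
      · intro h
        exfalso; apply h
        refine Finset.mem_Icc.2 ⟨(hbound (i+1) ω).1, ?_⟩
        calc s (i+1) ω ≤ s i ω := hmono i ω
        _ = v i := hω i le_rfl
    · rw [Set.indicator_of_notMem hω]
      symm
      apply Finset.sum_eq_zero
      intro j _
      have : ω ∉ B j := fun h => hω h.1
      rw [Set.indicator_of_notMem this]
  have hLHS : ∫⁻ ω, (A v).indicator (fun ω => ((s (i+1) ω - 1 : ℕ) : ENNReal)) ω ∂μ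
      = ∑ j ∈ Finset.Icc 1 (v i), ((j - 1 : ℕ) : ENNReal) * μ (B j) := by
    rw [lintegral_congr hLHSpt,
      lintegral_finset_sum _ (fun j _ => measurable_const.indicator (hB_meas j))]
    exact Finset.sum_congr rfl fun j _ => lintegral_indicator_const (hB_meas j) _
  rw [hLHS]
  by_cases hm : 1 < v i
  · refine le_of_eq ?_
    have hμB : ∀ j ∈ Finset.Icc 1 (v i), μ (B j) = (1 / (v i : ENNReal)) * μ (A v) := by
      intro j hj
      rcases Finset.mem_Icc.1 hj with ⟨h1, h2⟩
      exact hstep i v j hm h1 h2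
    rw [Finset.sum_congr rfl (fun j hj => by rw [hμB j hj])]
    rw [← Finset.sum_mul]
    have hgauss : (∑ j ∈ Finset.Icc 1 (v i), (j - 1)) * 2 = v i * (v i - 1) := by
      have h1 : Finset.Icc 1 (v i) = Finset.Ico 1 (v i + 1) := by
        rw [Finset.Ico_add_one_right_eq_Icc]
      rw [h1, Finset.sum_Ico_eq_sum_range]
      simp only [Nat.add_sub_cancel, Nat.add_sub_cancel_left]
      exact Finset.sum_range_id_mul_two (v i)
    have hcast : (2 : ENNReal) * (∑ j ∈ Finset.Icc 1 (v i), ((j - 1 : ℕ) : ENNReal))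
        = ((v i : ℕ) : ENNReal) * ((v i - 1 : ℕ) : ENNReal) := by
      rw [← Nat.cast_sum, mul_comm, ← Nat.cast_ofNat (n := 2), ← Nat.cast_mul, hgauss,
        Nat.cast_mul]
    calc 2 * ((∑ j ∈ Finset.Icc 1 (v i), ((j - 1 : ℕ) : ENNReal)) * (1 / (v i : ENNReal) * μ (A v)))
        = (2 * ∑ j ∈ Finset.Icc 1 (v i), ((j - 1 : ℕ) : ENNReal)) * (1 / (v i : ENNReal) * μ (A v)) := by ring
      _ = ((v i : ENNReal) * (1 / (v i : ENNReal))) * (((v i - 1 : ℕ) : ENNReal) * μ (A v)) := by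
          rw [hcast]; ring
      _ = ((v i - 1 : ℕ) : ENNReal) * μ (A v) := by
          rw [one_div, ENNReal.mul_inv_cancel (Nat.cast_ne_zero.2 (by omega)) (ENNReal.natCast_ne_top _), one_mul]
  · -- degenerate case v i ≤ 1
    have : ∑ j ∈ Finset.Icc 1 (v i), ((j - 1 : ℕ) : ENNReal) * μ (B j) = 0 := by
      apply Finset.sum_eq_zero
      intro j hj
      rcases Finset.mem_Icc.1 hj with ⟨h1, h2⟩
      have : j = 1 := le_antisymm (h2.trans (Nat.not_lt.1 hm)) h1
      simp [this]
    rw [this, mul_zero]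
    exact zero_le
/-- The random nonincreasing sequence of Kalai's algorithm (`s 0` uniform on `{1, …, N}`,
`s (i+1)` uniform on `{1, …, s i}`, stopping upon reaching the absorbing state `1`) has expected
length `O(log N)`: there is a constant `C > 0` such that for every `N ≥ 2` and every such chain,
the expectation of the length (the first hitting time of `1`, plus one) is at most
`C * log N`. -/
theorem stmt_8 :
    ∃ C : ℝ, 0 < C ∧ ∀ (N : ℕ), 2 ≤ N →
      ∀ (Ω : Type) (_ : MeasurableSpace Ω) (μ : Measure Ω), IsProbabilityMeasure μ →
      ∀ (s : ℕ → Ω → ℕ), (∀ i, Measurable (s i)) →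
        (∀ i ω, 1 ≤ s i ω ∧ s i ω ≤ N) →
        (∀ i ω, s (i + 1) ω ≤ s i ω) →
        (∀ i ω, s i ω = 1 → s (i + 1) ω = 1) →
        (∀ k, 1 ≤ k → k ≤ N → μ {ω | s 0 ω = k} = 1 / (N : ENNReal)) →
        (∀ (i : ℕ) (h : ℕ → ℕ) (j : ℕ), 1 < h i → 1 ≤ j → j ≤ h i →
          μ {ω | (∀ t ≤ i, s t ω = h t) ∧ s (i + 1) ω = j} =
            (1 / (h i : ENNReal)) * μ {ω | ∀ t ≤ i, s t ω = h t}) →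
        ∫⁻ ω, ((sInf {i | s i ω = 1} + 1 : ℕ) : ENNReal) ∂μ ≤
          ENNReal.ofReal (C * Real.log N) := by
  classical
  refine ⟨5 / Real.log 2, by positivity, ?_⟩
  intro N hN Ω mΩ μ hμ s hmeas hbound hmono habs hinit hstep
  set f : ℕ → ENNReal := fun m => ∫⁻ ω, ((s m ω - 1 : ℕ) : ENNReal) ∂μ with hf
  have hhalf : ∀ m, 2 * f (m+1) ≤ f m :=
    kalai_halving μ N s hmeas hbound hmono hstep
  have hf0 : f 0 ≤ (N : ENNReal) := by
    calc f 0 ≤ ∫⁻ _, (N : ENNReal) ∂μ := by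
          apply lintegral_mono
          intro ω
          exact_mod_cast Nat.cast_le.2 ((Nat.sub_le _ _).trans (hbound 0 ω).2)
      _ = N := by simp [lintegral_const]
  have hdecay : ∀ m, f m ≤ (N : ENNReal) * (2 : ENNReal)⁻¹ ^ m := by
    intro m
    induction m with
    | zero => simpa using hf0
    | succ m ih =>
      have h1 : f (m+1) ≤ f m / 2 := by
        rw [ENNReal.le_div_iff_mul_le (Or.inl two_ne_zero) (Or.inl ENNReal.ofNat_ne_top),
          mul_comm]
        exact hhalf m
      calc f (m+1) ≤ f m / 2 := h1
        _ ≤ ((N : ENNReal) * (2 : ENNReal)⁻¹ ^ m) / 2 := ENNReal.div_le_div_right ih 2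
        _ = (N : ENNReal) * (2 : ENNReal)⁻¹ ^ (m+1) := by
            rw [div_eq_mul_inv, mul_assoc, pow_succ]
  -- the measurable events
  have hSmeas : ∀ m, MeasurableSet {ω | 2 ≤ s m ω} := by
    intro m
    have : {ω | 2 ≤ s m ω} = (s m) ⁻¹' (Set.Ici 2) := rfl
    rw [this]
    exact (hmeas m) measurableSet_Ici
  have hμS : ∀ m, μ {ω | 2 ≤ s m ω} ≤ f m := by
    intro m
    have h1 : μ {ω | 2 ≤ s m ω}
        = ∫⁻ ω, ({ω | 2 ≤ s m ω}).indicator (fun _ => (1 : ENNReal)) ω ∂μ := by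
      rw [lintegral_indicator_const (hSmeas m), one_mul]
    rw [h1, hf]
    apply lintegral_mono
    intro ω
    by_cases hω : ω ∈ {ω | 2 ≤ s m ω}
    · rw [Set.indicator_of_mem hω]
      have : (1 : ℕ) ≤ s m ω - 1 := by
        have : 2 ≤ s m ω := hω
        omega
      exact_mod_cast Nat.one_le_cast.2 this
    · rw [Set.indicator_of_notMem hω]
      exact zero_le
  -- pointwise bound on the length
  have hpt : ∀ ω, ((sInf {i | s i ω = 1} + 1 : ℕ) : ENNReal)
      ≤ 1 + ∑' m, ({ω | 2 ≤ s m ω}).indicator (fun _ => (1 : ENNReal)) ω := by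
    intro ω
    by_cases hE : {i | s i ω = 1} = ∅
    · rw [hE, Nat.sInf_empty]
      simp
    · set T := sInf {i | s i ω = 1} with hT
      have hlt : ∀ m < T, 2 ≤ s m ω := by
        intro m hm
        have h1 : s m ω ≠ 1 := fun h => Nat.notMem_of_lt_sInf hm h
        have := (hbound m ω).1
        omega
      have hsum : (T : ENNReal) = ∑ m ∈ Finset.range T,
          ({ω | 2 ≤ s m ω}).indicator (fun _ => (1 : ENNReal)) ω := by
        rw [Finset.sum_congr rfl fun m hm =>
          Set.indicator_of_mem
            (show ω ∈ {x | 2 ≤ s m x} from hlt m (Finset.mem_range.1 hm)) _]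
        simp
      push_cast
      rw [add_comm]
      gcongr
      rw [hsum]
      exact ENNReal.sum_le_tsum _
  -- integrate
  have hint : ∫⁻ ω, ((sInf {i | s i ω = 1} + 1 : ℕ) : ENNReal) ∂μ
      ≤ 1 + ∑' m, μ {ω | 2 ≤ s m ω} := by
    calc ∫⁻ ω, ((sInf {i | s i ω = 1} + 1 : ℕ) : ENNReal) ∂μ
        ≤ ∫⁻ ω, (1 + ∑' m, ({ω | 2 ≤ s m ω}).indicator (fun _ => (1 : ENNReal)) ω) ∂μ :=
          lintegral_mono hpt
      _ = ∫⁻ _, (1 : ENNReal) ∂μ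
          + ∫⁻ ω, ∑' m, ({ω | 2 ≤ s m ω}).indicator (fun _ => (1 : ENNReal)) ω ∂μ :=
          lintegral_add_left measurable_const _
      _ = 1 + ∑' m, μ {ω | 2 ≤ s m ω} := by
          rw [lintegral_const, measure_univ, mul_one,
            lintegral_tsum (fun m => (measurable_const.indicator (hSmeas m)).aemeasurable)]
          congr 1
          exact tsum_congr fun m => by rw [lintegral_indicator_const (hSmeas m), one_mul]
  set k := Nat.clog 2 N with hk
  have hbd1 : ∀ m, μ {ω | 2 ≤ s m ω} ≤ 1 := fun m => prob_le_one
  have hNk : (N : ENNReal) * (2 : ENNReal)⁻¹ ^ k ≤ 1 := by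
    have h2k : (N : ENNReal) ≤ (2 : ENNReal) ^ k := by
      have := Nat.le_pow_clog one_lt_two N
      exact_mod_cast Nat.cast_le.2 this
    calc (N : ENNReal) * (2 : ENNReal)⁻¹ ^ k
        ≤ (2 : ENNReal) ^ k * (2 : ENNReal)⁻¹ ^ k := by gcongr
      _ = 1 := by
          rw [← mul_pow, ENNReal.mul_inv_cancel two_ne_zero ENNReal.ofNat_ne_top, one_pow]
  have htail : ∑' m, μ {ω | 2 ≤ s m ω} ≤ (k : ENNReal) + 2 := by
    apply ENNReal.tsum_le_of_sum_range_le
    intro n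
    rcases le_or_gt n k with hn | hn
    · calc ∑ m ∈ Finset.range n, μ {ω | 2 ≤ s m ω}
          ≤ ∑ _m ∈ Finset.range n, (1 : ENNReal) :=
            Finset.sum_le_sum fun m _ => hbd1 m
        _ = (n : ENNReal) := by simp
        _ ≤ (k : ENNReal) + 2 := by
            calc (n : ENNReal) ≤ (k : ENNReal) := by exact_mod_cast Nat.cast_le.2 hn
              _ ≤ (k : ENNReal) + 2 := le_self_add
    · rw [← Finset.sum_range_add_sum_Ico _ hn.le]
      gcongr
      · calc ∑ m ∈ Finset.range k, μ {ω | 2 ≤ s m ω}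
            ≤ ∑ _m ∈ Finset.range k, (1 : ENNReal) :=
              Finset.sum_le_sum fun m _ => hbd1 m
          _ = (k : ENNReal) := by simp
      · calc ∑ m ∈ Finset.Ico k n, μ {ω | 2 ≤ s m ω}
            ≤ ∑ m ∈ Finset.Ico k n, (N : ENNReal) * (2 : ENNReal)⁻¹ ^ m :=
              Finset.sum_le_sum fun m _ => (hμS m).trans (hdecay m)
          _ = ∑ j ∈ Finset.range (n - k), (N : ENNReal) * (2 : ENNReal)⁻¹ ^ (k + j) :=
              Finset.sum_Ico_eq_sum_range _ _ _
          _ ≤ ∑' j : ℕ, (N : ENNReal) * (2 : ENNReal)⁻¹ ^ (k + j) :=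
              ENNReal.sum_le_tsum _
          _ = (N : ENNReal) * (2 : ENNReal)⁻¹ ^ k * ∑' j : ℕ, (2 : ENNReal)⁻¹ ^ j := by
              rw [← ENNReal.tsum_mul_left]
              congr 1
              funext j
              rw [pow_add]
              ring
          _ ≤ 1 * ∑' j : ℕ, (2 : ENNReal)⁻¹ ^ j := by gcongr
          _ = 2 := by
              rw [one_mul, ENNReal.tsum_geometric]
              simp [ENNReal.one_sub_inv_two]
  have hfinal : ∫⁻ ω, ((sInf {i | s i ω = 1} + 1 : ℕ) : ENNReal) ∂μ
      ≤ (k : ENNReal) + 3 := by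
    calc ∫⁻ ω, ((sInf {i | s i ω = 1} + 1 : ℕ) : ENNReal) ∂μ
        ≤ 1 + ∑' m, μ {ω | 2 ≤ s m ω} := hint
      _ ≤ 1 + ((k : ENNReal) + 2) := by gcongr
      _ = (k : ENNReal) + 3 := by ring
  refine hfinal.trans ?_
  -- numeric estimate
  have hlog2 : (0 : ℝ) < Real.log 2 := Real.log_pos one_lt_two
  have hlogN : Real.log 2 ≤ Real.log N := by
    apply Real.log_le_log (by norm_num)
    exact_mod_cast hN
  have hk1 : 1 ≤ k := Nat.clog_pos one_lt_two hN
  have hpow : (2 : ℝ) ^ (k - 1) ≤ (N : ℝ) := by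
    have := Nat.pow_pred_clog_lt_self one_lt_two (x := N) (by omega)
    exact_mod_cast (this.le)
  have hklog : ((k : ℝ) - 1) * Real.log 2 ≤ Real.log N := by
    have h1 : Real.log ((2 : ℝ) ^ (k - 1)) ≤ Real.log N :=
      Real.log_le_log (by positivity) hpow
    rw [Real.log_pow] at h1
    have h2 : ((k - 1 : ℕ) : ℝ) = (k : ℝ) - 1 := by
      have : (1 : ℕ) ≤ k := hk1
      push_cast [this]
      ring
    rw [h2] at h1
    exact h1
  have hreal : (k : ℝ) + 3 ≤ (5 / Real.log 2) * Real.log N := by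
    rw [div_mul_eq_mul_div, le_div_iff₀ hlog2]
    nlinarith [hklog, hlogN, hlog2]
  calc (k : ENNReal) + 3 = ENNReal.ofReal ((k : ℝ) + 3) := by
        rw [ENNReal.ofReal_add (by positivity) (by norm_num), ENNReal.ofReal_natCast]
        norm_num
    _ ≤ ENNReal.ofReal ((5 / Real.log 2) * Real.log N) := ENNReal.ofReal_le_ofReal hreal
end
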